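/- With ℙ the projector from the decomposition of symmetric tensors on null metric hypersurface data (dimension n ≥ 2): (i) ℙ(V) = 0 for all V in the kernel K₀ of τ; (ii) ℙ(γ) = γ; (iii) ℙ(ℓ⊗_sω) = ℓ⊗_sω for any covector ω; (iv) if ω₁, ω₂ are covectors with ω₁(n) = ω₂(n) = 0, then ℙ(ω₁⊗_sω₂) = (P(ω₁,ω₂)/(n−1))γ. Consequently I − ℙ is a projector with range K₀ restricting to the identity on K₀. -/

import Mathlib

open Module LinearMap

variable {V : Type*} [AddCommGroup V] [Module ℝ V] [FiniteDimensional ℝ V]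

/-- The trace `P^{ab} W_{ab}`. -/
noncomputable def trP (P : Dual ℝ V →ₗ[ℝ] V) (W : V →ₗ[ℝ] Dual ℝ V) : ℝ :=
  LinearMap.trace ℝ V (P ∘ₗ W)

/-- The projector `ℙ`. -/
noncomputable def proj (γ : V →ₗ[ℝ] Dual ℝ V) (ℓ : Dual ℝ V) (l2 : ℝ) (n : V)
    (P : Dual ℝ V →ₗ[ℝ] V) (𝔫 : ℕ) (W : V →ₗ[ℝ] Dual ℝ V) : V →ₗ[ℝ] Dual ℝ V :=
  ℓ.smulRight (W n - W n n • ℓ) + (W n - W n n • ℓ).smulRight ℓ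
    + W n n • (ℓ.smulRight ℓ + (l2 / ((𝔫 : ℝ) - 1)) • γ)
    + (trP P W / ((𝔫 : ℝ) - 1)) • γ

/-! ℙ sees `W` only through `ι_n W` and `tr_P W`, and it reproduces both: `(ℙ W)(n) = W(n)`
because `γ(n, ·) = 0` and `ℓ(n) = 1`, and `tr_P (ℙ W) = tr_P W` because `P(ℓ, ·) = -ℓ⁽²⁾ n`
and `tr_P γ = 𝔫 - 1`. Hence `W - ℙ W` lies in `K₀`, which ℙ kills, and everything about
`I - ℙ` follows. The values (ii)–(iv) are direct evaluations of the formula for ℙ. -/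

section

variable {E : Type*} [AddCommGroup E] [Module ℝ E] {P : Dual ℝ E →ₗ[ℝ] E}

theorem trP_add (A B : E →ₗ[ℝ] Dual ℝ E) : trP P (A + B) = trP P A + trP P B := by
  simp [trP, comp_add]

theorem trP_sub (A B : E →ₗ[ℝ] Dual ℝ E) : trP P (A - B) = trP P A - trP P B := by
  simp [trP, comp_sub]

theorem trP_smul (a : ℝ) (A : E →ₗ[ℝ] Dual ℝ E) : trP P (a • A) = a * trP P A := by
  simp [trP, comp_smul]

theorem trP_smulRight [FiniteDimensional ℝ E] (ω χ : Dual ℝ E) :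
    trP P (ω.smulRight χ) = ω (P χ) := by
  have h : P ∘ₗ ω.smulRight χ = ω.smulRight (P χ) := by ext; simp
  rw [trP, h, trace_smulRight]

variable {γ : E →ₗ[ℝ] Dual ℝ E} {ℓ : Dual ℝ E} {l2 : ℝ} {n : E} {𝔫 : ℕ}

theorem trP_gamma [FiniteDimensional ℝ E] (hℓn : ℓ n = 1)
    (hPγ : ∀ x : E, P (γ x) + ℓ x • n = x) :
    trP P γ = finrank ℝ E - 1 := by
  have h : P ∘ₗ γ = LinearMap.id - ℓ.smulRight n := by
    ext x
    simpa [eq_sub_iff_add_eq] using hPγ x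
  rw [trP, h, map_sub, trace_id, trace_smulRight, hℓn]

theorem proj_eq_zero {W : E →ₗ[ℝ] Dual ℝ E} (hWn : W n = 0) (hW : trP P W = 0) :
    _root_.proj γ ℓ l2 n P 𝔫 W = 0 := by
  simp [_root_.proj, hWn, hW]

theorem proj_apply_n (hγn : γ n = 0) (hℓn : ℓ n = 1) (W : E →ₗ[ℝ] Dual ℝ E) :
    _root_.proj γ ℓ l2 n P 𝔫 W n = W n := by
  ext
  simp [_root_.proj, hℓn, hγn]

theorem trP_proj [FiniteDimensional ℝ E] (hℓn : ℓ n = 1)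
    (hPsym : ∀ ω χ : Dual ℝ E, ω (P χ) = χ (P ω))
    (hPℓ : P ℓ + l2 • n = 0) (hγ : trP P γ = (𝔫 : ℝ) - 1) (h𝔫 : (𝔫 : ℝ) - 1 ≠ 0)
    (W : E →ₗ[ℝ] Dual ℝ E) :
    trP P (_root_.proj γ ℓ l2 n P 𝔫 W) = trP P W := by
  have hPℓ' : P ℓ = -(l2 • n) := eq_neg_of_add_eq_zero_left hPℓ
  -- `u := ι_n W - W(n,n) ℓ` satisfies `u(n) = 0`, so `P(u, ℓ) = -ℓ⁽²⁾ u(n) = 0`.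
  have hu : (W n - W n n • ℓ) (P ℓ) = 0 := by simp [hPℓ', hℓn]; ring
  have hu' : ℓ (P (W n - W n n • ℓ)) = 0 := by rw [hPsym]; exact hu
  have hℓℓ : ℓ (P ℓ) = -l2 := by simp [hPℓ', hℓn]
  simp only [_root_.proj, trP_add, trP_smul, trP_smulRight, hu, hu', hℓℓ, hγ]
  field_simp
  ring

theorem proj_gamma (hγn : γ n = 0) (hγ : trP P γ = (𝔫 : ℝ) - 1) (h𝔫 : (𝔫 : ℝ) - 1 ≠ 0) :
    _root_.proj γ ℓ l2 n P 𝔫 γ = γ := by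
  simp [_root_.proj, hγn, hγ, div_self h𝔫]

theorem proj_symm_smulRight_ell [FiniteDimensional ℝ E] (hℓn : ℓ n = 1)
    (hPsym : ∀ ω χ : Dual ℝ E, ω (P χ) = χ (P ω))
    (hPℓ : P ℓ + l2 • n = 0) (h𝔫 : (𝔫 : ℝ) - 1 ≠ 0) (ω : Dual ℝ E) :
    _root_.proj γ ℓ l2 n P 𝔫 ((1 / 2 : ℝ) • (ℓ.smulRight ω + ω.smulRight ℓ))
      = (1 / 2 : ℝ) • (ℓ.smulRight ω + ω.smulRight ℓ) := by
  have htr : trP P ((1 / 2 : ℝ) • (ℓ.smulRight ω + ω.smulRight ℓ)) = -(l2 * ω n) := by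
    rw [trP_smul, trP_add, trP_smulRight, trP_smulRight, hPsym ℓ ω,
      eq_neg_of_add_eq_zero_left hPℓ]
    simp only [map_neg, map_smul, smul_eq_mul]
    ring
  ext x y
  simp only [_root_.proj, LinearMap.add_apply, LinearMap.smul_apply,
    smulRight_apply, LinearMap.sub_apply, smul_eq_mul, htr, hℓn]
  field_simp
  ring

theorem proj_symm_smulRight_of_apply_n [FiniteDimensional ℝ E]
    (hPsym : ∀ ω χ : Dual ℝ E, ω (P χ) = χ (P ω))
    (h𝔫 : (𝔫 : ℝ) - 1 ≠ 0) {ω₁ ω₂ : Dual ℝ E} (h₁ : ω₁ n = 0) (h₂ : ω₂ n = 0) :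
    _root_.proj γ ℓ l2 n P 𝔫 ((1 / 2 : ℝ) • (ω₁.smulRight ω₂ + ω₂.smulRight ω₁))
      = (ω₂ (P ω₁) / ((𝔫 : ℝ) - 1)) • γ := by
  have htr : trP P ((1 / 2 : ℝ) • (ω₁.smulRight ω₂ + ω₂.smulRight ω₁)) = ω₂ (P ω₁) := by
    rw [trP_smul, trP_add, trP_smulRight, trP_smulRight, hPsym ω₁ ω₂]
    ring
  ext x y
  simp only [_root_.proj, LinearMap.add_apply, LinearMap.smul_apply,
    smulRight_apply, LinearMap.sub_apply, smul_eq_mul, htr, h₁, h₂]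
  field_simp
  ring

end

theorem proj_properties_general
    (γ : V →ₗ[ℝ] Dual ℝ V) (ℓ : Dual ℝ V) (l2 : ℝ) (n : V) (P : Dual ℝ V →ₗ[ℝ] V)
    (𝔫 : ℕ) (hdim : finrank ℝ V = 𝔫) (h𝔫 : 2 ≤ 𝔫)
    (hγn : γ n = 0)
    (hℓn : ℓ n = 1)
    (hPsym : ∀ ω χ : Dual ℝ V, ω (P χ) = χ (P ω))
    (hPℓ : P ℓ + l2 • n = 0)
    (hPγ : ∀ x : V, P (γ x) + ℓ x • n = x) :
    -- (i) ℙ vanishes on the kernel K₀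
    (∀ W : V →ₗ[ℝ] Dual ℝ V, W n = 0 → trP P W = 0 → proj γ ℓ l2 n P 𝔫 W = 0) ∧
    -- (ii) ℙ(γ) = γ
    proj γ ℓ l2 n P 𝔫 γ = γ ∧
    -- (iii) ℙ(ℓ⊗ₛω) = ℓ⊗ₛω for any covector ω
    (∀ ω : Dual ℝ V,
      proj γ ℓ l2 n P 𝔫 ((1 / 2 : ℝ) • (ℓ.smulRight ω + ω.smulRight ℓ))
        = (1 / 2 : ℝ) • (ℓ.smulRight ω + ω.smulRight ℓ)) ∧
    -- (iv) ℙ(ω₁⊗ₛω₂) = (P(ω₁,ω₂)/(𝔫-1)) γ when ω₁(n) = ω₂(n) = 0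
    (∀ ω₁ ω₂ : Dual ℝ V, ω₁ n = 0 → ω₂ n = 0 →
      proj γ ℓ l2 n P 𝔫 ((1 / 2 : ℝ) • (ω₁.smulRight ω₂ + ω₂.smulRight ω₁))
        = (ω₂ (P ω₁) / ((𝔫 : ℝ) - 1)) • γ) ∧
    -- I - ℙ is a projector ...
    (∀ W : V →ₗ[ℝ] Dual ℝ V,
      (W - proj γ ℓ l2 n P 𝔫 W) - proj γ ℓ l2 n P 𝔫 (W - proj γ ℓ l2 n P 𝔫 W)
        = W - proj γ ℓ l2 n P 𝔫 W) ∧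
    -- ... with range contained in K₀ ...
    (∀ W : V →ₗ[ℝ] Dual ℝ V,
      (W - proj γ ℓ l2 n P 𝔫 W) n = 0 ∧ trP P (W - proj γ ℓ l2 n P 𝔫 W) = 0) ∧
    -- ... restricting to the identity on K₀
    (∀ W : V →ₗ[ℝ] Dual ℝ V, W n = 0 → trP P W = 0 → W - proj γ ℓ l2 n P 𝔫 W = W) := by
  have h𝔫' : (𝔫 : ℝ) - 1 ≠ 0 := by
    have : (2 : ℝ) ≤ 𝔫 := by exact_mod_cast h𝔫
    linarith
  have hγ : trP P γ = (𝔫 : ℝ) - 1 := by rw [trP_gamma hℓn hPγ, hdim]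
  have hK₀ : ∀ W : V →ₗ[ℝ] Dual ℝ V,
      (W - proj γ ℓ l2 n P 𝔫 W) n = 0 ∧ trP P (W - proj γ ℓ l2 n P 𝔫 W) = 0 := fun W =>
    ⟨by rw [LinearMap.sub_apply, proj_apply_n hγn hℓn, sub_self],
      by rw [trP_sub, trP_proj hℓn hPsym hPℓ hγ h𝔫', sub_self]⟩
  have hfix : ∀ W : V →ₗ[ℝ] Dual ℝ V, W n = 0 → trP P W = 0 → W - proj γ ℓ l2 n P 𝔫 W = W :=
    fun W hWn hW => by rw [proj_eq_zero hWn hW]; exact sub_zero W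
  exact ⟨fun W => proj_eq_zero, proj_gamma hγn hγ h𝔫', proj_symm_smulRight_ell hℓn hPsym hPℓ h𝔫',
    fun ω₁ ω₂ => proj_symm_smulRight_of_apply_n hPsym h𝔫', fun W => hfix _ (hK₀ W).1 (hK₀ W).2,
    hK₀, hfix⟩

/-- Properties of the projector `ℙ`: it kills the kernel `K₀` of `τ`, fixes `γ` and
`ℓ⊗ₛω`, maps `ω₁⊗ₛω₂` (with `ω₁(n)=ω₂(n)=0`) to `(P(ω₁,ω₂)/(𝔫-1))γ`; consequently `I - ℙ`
is a projector with range `K₀` restricting to the identity on `K₀`. -/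
theorem proj_properties
    (γ : V →ₗ[ℝ] Dual ℝ V) (ℓ : Dual ℝ V) (l2 : ℝ) (n : V) (P : Dual ℝ V →ₗ[ℝ] V)
    (𝔫 : ℕ) (hdim : finrank ℝ V = 𝔫) (h𝔫 : 2 ≤ 𝔫)
    (hγsym : ∀ x y, γ x y = γ y x)
    (hγn : γ n = 0)
    (hℓn : ℓ n = 1)
    (hPsym : ∀ ω χ : Dual ℝ V, ω (P χ) = χ (P ω))
    (hPℓ : P ℓ + l2 • n = 0)
    (hPγ : ∀ x : V, P (γ x) + ℓ x • n = x) :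
    -- (i) ℙ vanishes on the kernel K₀
    (∀ W : V →ₗ[ℝ] Dual ℝ V, W n = 0 → trP P W = 0 → proj γ ℓ l2 n P 𝔫 W = 0) ∧
    -- (ii) ℙ(γ) = γ
    proj γ ℓ l2 n P 𝔫 γ = γ ∧
    -- (iii) ℙ(ℓ⊗ₛω) = ℓ⊗ₛω for any covector ω
    (∀ ω : Dual ℝ V,
      proj γ ℓ l2 n P 𝔫 ((1 / 2 : ℝ) • (ℓ.smulRight ω + ω.smulRight ℓ))
        = (1 / 2 : ℝ) • (ℓ.smulRight ω + ω.smulRight ℓ)) ∧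
    -- (iv) ℙ(ω₁⊗ₛω₂) = (P(ω₁,ω₂)/(𝔫-1)) γ when ω₁(n) = ω₂(n) = 0
    (∀ ω₁ ω₂ : Dual ℝ V, ω₁ n = 0 → ω₂ n = 0 →
      proj γ ℓ l2 n P 𝔫 ((1 / 2 : ℝ) • (ω₁.smulRight ω₂ + ω₂.smulRight ω₁))
        = (ω₂ (P ω₁) / ((𝔫 : ℝ) - 1)) • γ) ∧
    -- I - ℙ is a projector ...
    (∀ W : V →ₗ[ℝ] Dual ℝ V,
      (W - proj γ ℓ l2 n P 𝔫 W) - proj γ ℓ l2 n P 𝔫 (W - proj γ ℓ l2 n P 𝔫 W)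
        = W - proj γ ℓ l2 n P 𝔫 W) ∧
    -- ... with range contained in K₀ ...
    (∀ W : V →ₗ[ℝ] Dual ℝ V,
      (W - proj γ ℓ l2 n P 𝔫 W) n = 0 ∧ trP P (W - proj γ ℓ l2 n P 𝔫 W) = 0) ∧
    -- ... restricting to the identity on K₀
    (∀ W : V →ₗ[ℝ] Dual ℝ V, W n = 0 → trP P W = 0 → W - proj γ ℓ l2 n P 𝔫 W = W) :=
  proj_properties_general γ ℓ l2 n P 𝔫 hdim h𝔫 hγn hℓn hPsym hPℓ hPγ
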